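/- arXiv:2104.05202 — 2 statements merged into one kernel-verified Lean document; each statement's English description precedes it below -/
import Mathlib

section
/- Fix disjoint finite sets S, P and a subspace T of ℂ^{S⊎P}. Let A ⊆ ℂ^S × ℂ^S be an affine space with vector space translate V, and suppose the port behaviour B(A) is nonempty, so that B(A) is an affine space with vector space translate B(V). Then the port behaviour of the adjoint device characteristic equals the adjoint of this translate: B(V^adj) = (B(V))^adj, where the adjoint on the right is taken in ℂ^P × ℂ^P. -/
/-!
STATEMENT 8: Fix disjoint finite sets S, P and a subspace T of ℂ^{S⊎P}. Let
A ⊆ ℂ^S × ℂ^S be an affine space with vector space translate V, and suppose the port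
behaviour B(A) is nonempty (so that B(A) is an affine space with vector space
translate B(V)). Then the port behaviour of the adjoint device characteristic equals
the adjoint of this translate: B(V^adj) = (B(V))^adj, the adjoint on the right being
taken in ℂ^P × ℂ^P.
-/

/-- Hermitian inner product on `ℂ^X`: `⟨f,g⟩ = Σ_e f e * conj (g e)`. -/
noncomputable def hinner {X : Type*} [Fintype X] (f g : X → ℂ) : ℂ :=
  ∑ e, f e * (starRingEnd ℂ) (g e)

/-- Orthogonal complement (as a set) in `ℂ^X × ℂ^Y` with inner product
`⟨(f₁,f₂),(g₁,g₂)⟩ = ⟨f₁,g₁⟩ + ⟨f₂,g₂⟩`. -/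
def pperp {X Y : Type*} [Fintype X] [Fintype Y] (K : Set ((X → ℂ) × (Y → ℂ))) :
    Set ((X → ℂ) × (Y → ℂ)) :=
  {g | ∀ f ∈ K, hinner f.1 g.1 + hinner f.2 g.2 = 0}

/-- Adjoint of a collection of voltage-current pairs:
`K^adj := {(v,i) : (−i,v) ∈ K^⊥}`. -/
def adjSet {X : Type*} [Fintype X] (K : Set ((X → ℂ) × (X → ℂ))) :
    Set ((X → ℂ) × (X → ℂ)) :=
  {w | (-w.2, w.1) ∈ pperp K}

/-- The port behaviour of a device characteristic `K ⊆ ℂ^S × ℂ^S` relative to the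
KVL space `T ⊆ ℂ^{S⊎P}` (with KCL space `T^⊥`). -/
def portB {S P : Type*} [Fintype S] [Fintype P]
    (T : Submodule ℂ ((S → ℂ) × (P → ℂ))) (K : Set ((S → ℂ) × (S → ℂ))) :
    Set ((P → ℂ) × (P → ℂ)) :=
  {w | ∃ (vS iS : S → ℂ) (vP iP : P → ℂ),
      (vS, iS) ∈ K ∧ (vS, vP) ∈ T ∧
      (iS, iP) ∈ pperp (T : Set ((S → ℂ) × (P → ℂ))) ∧ w = (vP, -iP)}

/-!
Glue internal and port quantities into the single space `ℂ^{S ⊕ P} × ℂ^{S ⊕ P}`. There the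
port behaviour `B(K)` is the projection to the port coordinates of `C ∩ K̂`, where `C`
(voltages in `T`, currents in `T^⊥`) is the coupling space and `K̂` is the preimage of `K`
under restriction to `S`. Since `T^⊥⊥ = T`, `C` is self-adjoint, and finite-dimensional
duality gives `(C ∩ V̂)^adj = C + V̂^adj`, where `V̂^adj` consists of the vectors vanishing on
the ports whose restriction to `S` lies in `V^adj`. Taking adjoints turns projection to the
ports into slicing at the ports, so `B(V)^adj` is the port slice of `C + V̂^adj`; because
`V̂^adj` vanishes on the ports, that slice is the projection of `C ∩ (V^adj)^`, i.e. `B(V^adj)`.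
-/

open scoped InnerProductSpace

noncomputable def toEuclideanSum (X Y : Type*) [Fintype X] [Fintype Y] :
    ((X → ℂ) × (Y → ℂ)) ≃ₗ[ℂ] EuclideanSpace ℂ (X ⊕ Y) :=
  (LinearEquiv.sumArrowLequivProdArrow X Y ℂ ℂ).symm.trans
    (EuclideanSpace.equiv (X ⊕ Y) ℂ).toLinearEquiv.symm

section Pairing

variable {X Y : Type*} [Fintype X] [Fintype Y]

lemma hinner_eq_inner (f g : X → ℂ) : hinner f g = ⟪WithLp.toLp 2 g, WithLp.toLp 2 f⟫_ℂ := by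
  simp [hinner, PiLp.inner_apply]

lemma hinner_neg_left (f g : X → ℂ) : hinner (-f) g = -hinner f g := by
  simp [hinner]

lemma hinner_neg_right (f g : X → ℂ) : hinner f (-g) = -hinner f g := by
  simp [hinner]

@[simp] lemma hinner_zero_left (g : X → ℂ) : hinner 0 g = 0 := by simp [hinner]

@[simp] lemma hinner_zero_right (f : X → ℂ) : hinner f 0 = 0 := by simp [hinner]

lemma conj_hinner (f g : X → ℂ) : starRingEnd ℂ (hinner f g) = hinner g f := by
  simp [hinner_eq_inner]

lemma eq_zero_of_forall_hinner_eq_zero {g : X → ℂ} (h : ∀ f, hinner f g = 0) : g = 0 := by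
  simpa [hinner_eq_inner] using h g

lemma hinner_sum (a b : X ⊕ Y → ℂ) :
    hinner a b = hinner (a ∘ Sum.inl) (b ∘ Sum.inl) + hinner (a ∘ Sum.inr) (b ∘ Sum.inr) :=
  Fintype.sum_sum_type _

lemma hinner_add_hinner_eq_inner (f g : (X → ℂ) × (Y → ℂ)) :
    hinner f.1 g.1 + hinner f.2 g.2 = ⟪toEuclideanSum X Y g, toEuclideanSum X Y f⟫_ℂ := by
  obtain ⟨f₁, f₂⟩ := f
  obtain ⟨g₁, g₂⟩ := g
  simp [hinner, toEuclideanSum, PiLp.inner_apply, Fintype.sum_sum_type]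

end Pairing

section Orthogonal

variable {X Y Z : Type*} [Fintype X] [Fintype Y] [Fintype Z]

noncomputable def perp (K : Submodule ℂ ((X → ℂ) × (Y → ℂ))) :
    Submodule ℂ ((X → ℂ) × (Y → ℂ)) :=
  (K.map (toEuclideanSum X Y).toLinearMap)ᗮ.comap (toEuclideanSum X Y).toLinearMap

lemma coe_perp (K : Submodule ℂ ((X → ℂ) × (Y → ℂ))) :
    (perp K : Set ((X → ℂ) × (Y → ℂ))) = pperp (K : Set ((X → ℂ) × (Y → ℂ))) := by
  ext g
  simp only [perp, SetLike.mem_coe, Submodule.mem_comap, Submodule.mem_orthogonal',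
    Submodule.mem_map, forall_exists_index, and_imp, forall_apply_eq_imp_iff₂, LinearEquiv.coe_coe,
    pperp, Set.mem_ofPred_eq, hinner_add_hinner_eq_inner]

lemma perp_perp (K : Submodule ℂ ((X → ℂ) × (Y → ℂ))) : perp (perp K) = K := by
  have he := (toEuclideanSum X Y).surjective
  rw [perp, perp, Submodule.map_comap_eq_of_surjective he, Submodule.orthogonal_orthogonal,
    Submodule.comap_map_eq_of_injective (toEuclideanSum X Y).injective]

lemma perp_sup (K L : Submodule ℂ ((X → ℂ) × (Y → ℂ))) : perp (K ⊔ L) = perp K ⊓ perp L := by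
  rw [perp, perp, perp, Submodule.map_sup, ← Submodule.inf_orthogonal, Submodule.comap_inf]

lemma perp_inf (K L : Submodule ℂ ((X → ℂ) × (Y → ℂ))) : perp (K ⊓ L) = perp K ⊔ perp L := by
  conv_lhs => rw [← perp_perp K, ← perp_perp L, ← perp_sup, perp_perp]

noncomputable def rot (Z : Type*) [Fintype Z] : ((Z → ℂ) × (Z → ℂ)) ≃ₗ[ℂ] ((Z → ℂ) × (Z → ℂ)) where
  toFun w := (-w.2, w.1)
  invFun w := (w.2, -w.1)
  map_add' a b := by simp [add_comm]
  map_smul' c a := by simp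
  left_inv w := by simp
  right_inv w := by simp

lemma hinner_add_hinner_rot (f g : (Z → ℂ) × (Z → ℂ)) :
    hinner (rot Z f).1 (rot Z g).1 + hinner (rot Z f).2 (rot Z g).2
      = hinner f.1 g.1 + hinner f.2 g.2 := by
  simp [rot, hinner, add_comm]

lemma perp_comap_rot (K : Submodule ℂ ((Z → ℂ) × (Z → ℂ))) :
    perp (K.comap (rot Z).toLinearMap) = (perp K).comap (rot Z).toLinearMap := by
  ext g
  rw [Submodule.mem_comap, LinearEquiv.coe_coe, ← SetLike.mem_coe, ← SetLike.mem_coe, coe_perp,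
    coe_perp]
  refine ⟨fun h m hm => ?_, fun h f hf => ?_⟩
  · rw [← (rot Z).apply_symm_apply m, hinner_add_hinner_rot]
    exact h _ (by simpa using hm)
  · rw [← hinner_add_hinner_rot]
    exact h _ hf

noncomputable def adj (K : Submodule ℂ ((Z → ℂ) × (Z → ℂ))) : Submodule ℂ ((Z → ℂ) × (Z → ℂ)) :=
  (perp K).comap (rot Z).toLinearMap

lemma coe_adj (K : Submodule ℂ ((Z → ℂ) × (Z → ℂ))) :
    (adj K : Set ((Z → ℂ) × (Z → ℂ))) = adjSet (K : Set ((Z → ℂ) × (Z → ℂ))) := by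
  rw [adj, Submodule.comap_coe, coe_perp]
  rfl

lemma mem_adjSet {K : Set ((Z → ℂ) × (Z → ℂ))} {w : (Z → ℂ) × (Z → ℂ)} :
    w ∈ adjSet K ↔ ∀ f ∈ K, hinner f.2 w.1 = hinner f.1 w.2 := by
  simp only [adjSet, pperp, Set.mem_ofPred_eq, hinner_neg_right, neg_add_eq_zero, eq_comm]

lemma adj_adj (K : Submodule ℂ ((Z → ℂ) × (Z → ℂ))) : adj (adj K) = K := by
  ext w
  have hrot : rot Z (rot Z w) = -w := rfl
  rw [adj, adj, perp_comap_rot, perp_perp, Submodule.mem_comap, Submodule.mem_comap,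
    LinearEquiv.coe_coe, hrot, neg_mem_iff]

lemma adj_inf (K L : Submodule ℂ ((Z → ℂ) × (Z → ℂ))) : adj (K ⊓ L) = adj K ⊔ adj L := by
  simp only [adj, perp_inf, Submodule.comap_equiv_eq_map_symm, Submodule.map_sup]

end Orthogonal

section Ports

variable {S P : Type*}

noncomputable def restrictInl : ((S ⊕ P → ℂ) × (S ⊕ P → ℂ)) →ₗ[ℂ] (S → ℂ) × (S → ℂ) :=
  (LinearMap.funLeft ℂ ℂ Sum.inl).prodMap (LinearMap.funLeft ℂ ℂ Sum.inl)

noncomputable def restrictInr : ((S ⊕ P → ℂ) × (S ⊕ P → ℂ)) →ₗ[ℂ] (P → ℂ) × (P → ℂ) :=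
  (LinearMap.funLeft ℂ ℂ Sum.inr).prodMap (LinearMap.funLeft ℂ ℂ Sum.inr)

lemma restrictInl_apply (f : (S ⊕ P → ℂ) × (S ⊕ P → ℂ)) :
    restrictInl f = (f.1 ∘ Sum.inl, f.2 ∘ Sum.inl) := rfl

lemma restrictInr_apply (f : (S ⊕ P → ℂ) × (S ⊕ P → ℂ)) :
    restrictInr f = (f.1 ∘ Sum.inr, f.2 ∘ Sum.inr) := rfl

noncomputable def portProj : ((S ⊕ P → ℂ) × (S ⊕ P → ℂ)) →ₗ[ℂ] (P → ℂ) × (P → ℂ) :=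
  (LinearMap.id.prodMap (-LinearMap.id)) ∘ₗ restrictInr

def portExt (w : (P → ℂ) × (P → ℂ)) : (S ⊕ P → ℂ) × (S ⊕ P → ℂ) :=
  (Sum.elim 0 w.1, Sum.elim 0 (-w.2))

lemma restrictInl_portExt (w : (P → ℂ) × (P → ℂ)) : restrictInl (portExt (S := S) w) = 0 := by
  ext <;> rfl

lemma portProj_portExt (w : (P → ℂ) × (P → ℂ)) : portProj (portExt (S := S) w) = w := by
  ext <;> simp [portProj, portExt, restrictInr, LinearMap.funLeft]

lemma restrictInr_portExt_portProj (f : (S ⊕ P → ℂ) × (S ⊕ P → ℂ)) :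
    restrictInr (portExt (S := S) (portProj f)) = restrictInr f := by
  ext <;> simp [portProj, portExt, restrictInr, LinearMap.funLeft]

lemma image_portProj_inf (M : Submodule ℂ ((S ⊕ P → ℂ) × (S ⊕ P → ℂ)))
    (N : Submodule ℂ ((S → ℂ) × (S → ℂ))) :
    portProj '' ((M ⊓ N.comap restrictInl : Submodule ℂ _) : Set ((S ⊕ P → ℂ) × (S ⊕ P → ℂ)))
      = portExt ⁻¹' ((M ⊔ N.comap restrictInl ⊓ LinearMap.ker restrictInr : Submodule ℂ _) :
          Set ((S ⊕ P → ℂ) × (S ⊕ P → ℂ))) := by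
  ext w
  simp only [Set.mem_image, Set.mem_preimage, SetLike.mem_coe]
  constructor
  · rintro ⟨f, ⟨hfM, hfN⟩, rfl⟩
    have hg : f - portExt (portProj f) ∈ N.comap restrictInl ⊓ LinearMap.ker restrictInr := by
      refine ⟨?_, ?_⟩
      · simpa [Submodule.mem_comap, restrictInl_portExt] using hfN
      · simp [LinearMap.mem_ker, restrictInr_portExt_portProj]
    simpa using Submodule.sub_mem_sup hfM hg
  · intro h
    obtain ⟨m, hm, g, ⟨hgN, hgP⟩, hsum⟩ := Submodule.mem_sup.1 h
    have hm' : m = portExt w - g := eq_sub_of_add_eq hsum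
    refine ⟨m, ⟨hm, ?_⟩, ?_⟩
    · simpa [Submodule.mem_comap, hm', restrictInl_portExt] using N.neg_mem hgN
    · have hg0 : portProj g = 0 := by
        rw [portProj, LinearMap.comp_apply, LinearMap.mem_ker.1 hgP, map_zero]
      rw [hm', map_sub, portProj_portExt, hg0, sub_zero]

variable [Fintype S] [Fintype P]

noncomputable def coupling (T : Submodule ℂ ((S → ℂ) × (P → ℂ))) :
    Submodule ℂ ((S ⊕ P → ℂ) × (S ⊕ P → ℂ)) :=
  (T.comap (LinearEquiv.sumArrowLequivProdArrow S P ℂ ℂ).toLinearMap).prod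
    ((perp T).comap (LinearEquiv.sumArrowLequivProdArrow S P ℂ ℂ).toLinearMap)

lemma mem_coupling {T : Submodule ℂ ((S → ℂ) × (P → ℂ))} {f : (S ⊕ P → ℂ) × (S ⊕ P → ℂ)} :
    f ∈ coupling T ↔ (f.1 ∘ Sum.inl, f.1 ∘ Sum.inr) ∈ T ∧
      (f.2 ∘ Sum.inl, f.2 ∘ Sum.inr) ∈ pperp (T : Set ((S → ℂ) × (P → ℂ))) := by
  rw [← coe_perp]
  rfl

lemma portB_eq_image (T : Submodule ℂ ((S → ℂ) × (P → ℂ))) (K : Set ((S → ℂ) × (S → ℂ))) :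
    portB T K = portProj '' ((coupling T : Set _) ∩ restrictInl ⁻¹' K) := by
  ext w
  constructor
  · rintro ⟨vS, iS, vP, iP, hK, hT, hT', rfl⟩
    exact ⟨(Sum.elim vS vP, Sum.elim iS iP), ⟨mem_coupling.2 ⟨hT, hT'⟩, hK⟩, rfl⟩
  · rintro ⟨f, ⟨hC, hK⟩, rfl⟩
    obtain ⟨hT, hT'⟩ := mem_coupling.1 hC
    exact ⟨_, _, _, _, hK, hT, hT', rfl⟩

lemma adjSet_image_portProj (M : Set ((S ⊕ P → ℂ) × (S ⊕ P → ℂ))) :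
    adjSet (portProj '' M) = portExt ⁻¹' adjSet M := by
  ext w
  simp only [Set.mem_preimage, mem_adjSet, Set.forall_mem_image]
  refine forall₂_congr fun f _ => ?_
  rw [hinner_sum f.2, hinner_sum f.1]
  simp [portProj, portExt, restrictInr, LinearMap.funLeft, hinner_neg_left, hinner_neg_right,
    neg_eq_iff_eq_neg]

lemma adj_coupling (T : Submodule ℂ ((S → ℂ) × (P → ℂ))) : adj (coupling T) = coupling T := by
  ext w
  rw [← SetLike.mem_coe, coe_adj, mem_adjSet]
  simp only [SetLike.mem_coe]
  have hzero : (0 : (S → ℂ) × (P → ℂ)) ∈ pperp (T : Set ((S → ℂ) × (P → ℂ))) := by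
    rw [← coe_perp]
    exact zero_mem _
  constructor
  · intro h
    refine mem_coupling.2 ⟨?_, ?_⟩
    · rw [← SetLike.mem_coe, ← perp_perp T, coe_perp, coe_perp]
      rintro ⟨iS, iP⟩ hi
      simpa [hinner_sum] using h (0, Sum.elim iS iP) (mem_coupling.2 ⟨zero_mem T, hi⟩)
    · rintro ⟨vS, vP⟩ hv
      simpa [hinner_sum, eq_comm] using h (Sum.elim vS vP, 0) (mem_coupling.2 ⟨hv, hzero⟩)
  · intro hw f hf
    obtain ⟨hw1, hw2⟩ := mem_coupling.1 hw
    obtain ⟨hf1, hf2⟩ := mem_coupling.1 hf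
    rw [← conj_hinner, hinner_sum w.1, hf2 _ hw1, hinner_sum f.1, hw2 _ hf1, map_zero]

lemma adj_comap_restrictInl (V : Submodule ℂ ((S → ℂ) × (S → ℂ))) :
    adj (V.comap (restrictInl (P := P)))
      = (adj V).comap restrictInl ⊓ LinearMap.ker restrictInr := by
  ext w
  rw [Submodule.mem_inf, Submodule.mem_comap, LinearMap.mem_ker, ← SetLike.mem_coe, coe_adj,
    mem_adjSet, ← SetLike.mem_coe, coe_adj, mem_adjSet]
  simp only [SetLike.mem_coe, Submodule.mem_comap]
  constructor
  · intro h
    have hw1 : w.1 ∘ Sum.inr = 0 := eq_zero_of_forall_hinner_eq_zero fun p => by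
      simpa [hinner_sum] using h (0, Sum.elim 0 p) V.zero_mem
    have hw2 : w.2 ∘ Sum.inr = 0 := eq_zero_of_forall_hinner_eq_zero fun p => by
      simpa [hinner_sum, eq_comm] using h (Sum.elim 0 p, 0) V.zero_mem
    refine ⟨fun g hg => ?_, by simp [restrictInr_apply, hw1, hw2]⟩
    simpa [restrictInl_apply, hinner_sum, hw1, hw2] using h (Sum.elim g.1 0, Sum.elim g.2 0) hg
  · intro h f hf
    simp only [restrictInr_apply, Prod.mk_eq_zero] at h
    simpa [restrictInl_apply, hinner_sum, h.2.1, h.2.2] using h.1 _ hf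

end Ports

theorem statement8_general (S P : Type*) [Fintype S] [Fintype P]
    (T : Submodule ℂ ((S → ℂ) × (P → ℂ)))
    (V : Submodule ℂ ((S → ℂ) × (S → ℂ))) :
    portB T (adjSet (V : Set ((S → ℂ) × (S → ℂ))))
      = adjSet (portB T (V : Set ((S → ℂ) × (S → ℂ)))) := by
  calc portB T (adjSet (V : Set ((S → ℂ) × (S → ℂ))))
      = portProj '' ((coupling T ⊓ (adj V).comap restrictInl : Submodule ℂ _) :
          Set ((S ⊕ P → ℂ) × (S ⊕ P → ℂ))) := by
        rw [portB_eq_image, ← coe_adj]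
        rfl
    _ = portExt ⁻¹' ((coupling T ⊔ adj (V.comap restrictInl) : Submodule ℂ _) :
          Set ((S ⊕ P → ℂ) × (S ⊕ P → ℂ))) := by
        rw [image_portProj_inf, adj_comap_restrictInl]
    _ = portExt ⁻¹' (adj (coupling T ⊓ V.comap restrictInl) :
          Set ((S ⊕ P → ℂ) × (S ⊕ P → ℂ))) := by
        rw [adj_inf, adj_coupling]
    _ = adjSet (portB T (V : Set ((S → ℂ) × (S → ℂ)))) := by
        rw [coe_adj, portB_eq_image, adjSet_image_portProj]
        rfl

theorem statement8 (S P : Type*) [Fintype S] [Fintype P]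
    (T : Submodule ℂ ((S → ℂ) × (P → ℂ)))
    (V : Submodule ℂ ((S → ℂ) × (S → ℂ)))
    (A : Set ((S → ℂ) × (S → ℂ))) (x : (S → ℂ) × (S → ℂ))
    (hA : A = (x + ·) '' (V : Set ((S → ℂ) × (S → ℂ))))
    (hne : (portB T A).Nonempty) :
    portB T (adjSet (V : Set ((S → ℂ) × (S → ℂ))))
      = adjSet (portB T (V : Set ((S → ℂ) × (S → ℂ)))) :=
  statement8_general S P T V
end

section
/- Let P be a finite set, let B and Q be m × P complex matrices, s ∈ ℂ^m, A := {(v,i) ∈ ℂ^P × ℂ^P : Bv − Qi = s}, and let V := {(δv,δi) : B·δv − Q·δi = 0} be its vector space translate. Suppose (v°,i°) ∈ A satisfies v° = −Q*·λ and i° = B*·λ for some λ ∈ ℂ^m. If V is passive, then 2·Re⟨v,i⟩ ≥ 2·Re⟨v°,i°⟩ for all (v,i) ∈ A (so the power delivered, −2·Re⟨v,i⟩, is maximized at (v°,i°)). If V is strictly passive, then the inequality is strict for every (v,i) ∈ A with (v,i) ≠ (v°,i°), so (v°,i°) is the unique maximizer of delivered power on A. -/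
open Matrix

lemma hinner_add_add {X : Type*} [Fintype X] (a b c d : X → ℂ) :
    hinner (a + b) (c + d) = hinner a c + hinner a d + hinner b c + hinner b d := by
  simp only [hinner, Pi.add_apply, map_add]
  rw [← Finset.sum_add_distrib, ← Finset.sum_add_distrib, ← Finset.sum_add_distrib]
  exact Finset.sum_congr rfl (fun e _ => by ring)

lemma hinner_conj {X : Type*} [Fintype X] (a b : X → ℂ) :
    hinner a b = (starRingEnd ℂ) (hinner b a) := by
  simp only [hinner, map_sum]
  exact Finset.sum_congr rfl (fun e _ => by rw [_root_.map_mul, Complex.conj_conj]; ring)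

lemma hinner_mulVec {X : Type*} [Fintype X] (m : ℕ) (M : Matrix (Fin m) X ℂ)
    (x : X → ℂ) (l : Fin m → ℂ) :
    hinner x (Mᴴ.mulVec l) = (M.mulVec x) ⬝ᵥ (star l) := by
  simp only [hinner, mulVec, dotProduct, conjTranspose_apply, map_sum, _root_.map_mul,
    Complex.conj_conj, Pi.star_apply, Finset.sum_mul, Finset.mul_sum]
  rw [Finset.sum_comm]
  exact Finset.sum_congr rfl (fun e _ => Finset.sum_congr rfl (fun j _ => by
    simp [RCLike.star_def]; ring))

theorem statement16 (P : Type*) [Fintype P] (m : ℕ)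
    (B Q : Matrix (Fin m) P ℂ) (s : Fin m → ℂ) (v0 i0 : P → ℂ)
    (hmem : B.mulVec v0 - Q.mulVec i0 = s)
    (lam : Fin m → ℂ) (hv0 : v0 = -(Qᴴ.mulVec lam)) (hi0 : i0 = Bᴴ.mulVec lam) :
    -- if V is passive then (v°,i°) maximizes delivered power on A
    ((∀ x y : P → ℂ, B.mulVec x - Q.mulVec y = 0 → 0 ≤ 2 * (hinner x y).re) →
      ∀ v i : P → ℂ, B.mulVec v - Q.mulVec i = s →
        2 * (hinner v0 i0).re ≤ 2 * (hinner v i).re) ∧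
    -- if V is strictly passive then (v°,i°) is the unique maximizer
    ((∀ x y : P → ℂ, B.mulVec x - Q.mulVec y = 0 → (x, y) ≠ 0 →
        0 < 2 * (hinner x y).re) →
      ∀ v i : P → ℂ, B.mulVec v - Q.mulVec i = s → (v, i) ≠ (v0, i0) →
        2 * (hinner v0 i0).re < 2 * (hinner v i).re) := by
  -- main decomposition
  have key : ∀ v i : P → ℂ, B.mulVec v - Q.mulVec i = s →
      (B.mulVec (v - v0) - Q.mulVec (i - i0) = 0) ∧
      (hinner v i).re = (hinner v0 i0).re + (hinner (v - v0) (i - i0)).re := by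
    intro v i hvi
    have hx : B.mulVec (v - v0) - Q.mulVec (i - i0) = 0 := by
      rw [mulVec_sub, mulVec_sub]
      have : B.mulVec v - B.mulVec v0 - (Q.mulVec i - Q.mulVec i0)
          = (B.mulVec v - Q.mulVec i) - (B.mulVec v0 - Q.mulVec i0) := by abel
      rw [this, hvi, hmem, sub_self]
    refine ⟨hx, ?_⟩
    have hsplit : hinner v i = hinner v0 i0 + hinner v0 (i - i0)
        + hinner (v - v0) i0 + hinner (v - v0) (i - i0) := by
      have := hinner_add_add v0 (v - v0) i0 (i - i0)
      simpa using this
    have hcross : (hinner v0 (i - i0)).re + (hinner (v - v0) i0).re = 0 := by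
      have h1 : hinner (v - v0) i0 = (B.mulVec (v - v0)) ⬝ᵥ (star lam) := by
        rw [hi0, hinner_mulVec]
      have h2 : hinner v0 (i - i0)
          = - (starRingEnd ℂ) ((Q.mulVec (i - i0)) ⬝ᵥ (star lam)) := by
        rw [hinner_conj, hv0]
        rw [show hinner (i - i0) (-(Qᴴ.mulVec lam)) = - hinner (i - i0) (Qᴴ.mulVec lam) by
          simp [hinner, Finset.sum_neg_distrib]]
        rw [hinner_mulVec]
        simp
      rw [h1, h2]
      have : ((Q.mulVec (i - i0)) ⬝ᵥ (star lam)).re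
          = ((B.mulVec (v - v0)) ⬝ᵥ (star lam)).re := by
        have h0 : B.mulVec (v - v0) = Q.mulVec (i - i0) := by
          have := sub_eq_zero.mp hx; exact this
        rw [h0]
      simp [Complex.conj_re, this]
    rw [hsplit]
    simp only [Complex.add_re]
    linarith
  constructor
  · intro hpass v i hvi
    obtain ⟨hx, heq⟩ := key v i hvi
    have := hpass _ _ hx
    rw [heq]; linarith
  · intro hpass v i hvi hne
    obtain ⟨hx, heq⟩ := key v i hvi
    have hne' : (v - v0, i - i0) ≠ (0 : (P → ℂ) × (P → ℂ)) := by
      intro h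
      apply hne
      have h1 : v - v0 = 0 := congrArg Prod.fst h
      have h2 : i - i0 = 0 := congrArg Prod.snd h
      have := sub_eq_zero.mp h1
      have := sub_eq_zero.mp h2
      simp_all
    have := hpass _ _ hx hne'
    rw [heq]; linarith
end
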